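/- arXiv:1211.4433 — 2 statements merged into one kernel-verified Lean document; each statement's English description precedes it below -/
import Mathlib

section
/- Let n ≥ 6 be even, a = n/2, and let k'_1 < k'_2 < ⋯ < k'_a and k'_{a+1} < ⋯ < k'_{n-2} be two increasing sequences partitioning {2,3,...,n-1}. Then the sum ((1/2)n² − (3/2)n + 1)·(C(a,2) + C(n-2-a,2)) + Σ_{1≤i<j≤a}(k'_j − k'_i) + Σ_{a+1≤i<j≤n-2}(k'_j − k'_i) is at most (1/8)n⁴ − (25/24)n³ + (7/2)n² − (29/6)n + 2. -/
/-!
Write `k j - k i = #{t : k i ≤ t < k j}`. For a block `B` on which `k` is monotone, the sum of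
`k j - k i` over pairs `i < j` in `B` becomes `∑ₜ bₜ (#B - bₜ)`, where `bₜ` counts the indices of
`B` with value at most `t`. Since `k` maps `{1, …, n-2}` bijectively onto `{2, …, n-1}`, the counts
`x, y` of the two blocks (of sizes `m` and `m - 2`, where `n = 2m`) satisfy `x + y = t - 1`, and
under `x + y = s` the quantity `x (m - x) + y (m - 2 - y)` is at most
`(2(m-1)s - s² + s mod 2) / 2`. Summing this over `t` yields the bound.
-/

open Finset

theorem MonotoneOn.sum_filter_lt_sub_eq_sum_card_le_mul {ι : Type*} [LinearOrder ι]
    {B : Finset ι} {k : ι → ℕ} (hk : MonotoneOn k B) {lo hi : ℕ}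
    (hrange : Set.MapsTo k B (Set.Icc lo hi)) :
    ∑ p ∈ (B ×ˢ B).filter (fun p => p.1 < p.2), ((k p.2 : ℚ) - k p.1) =
      ∑ t ∈ Ico lo hi, (#{i ∈ B | k i ≤ t} : ℚ) * (#B - #{i ∈ B | k i ≤ t}) := by
  set P := (B ×ˢ B).filter (fun p => p.1 < p.2)
  let r : ι × ι → ℕ → Prop := fun p t => k p.1 ≤ t ∧ t < k p.2
  have gap : ∀ p ∈ P, ((k p.2 : ℚ) - k p.1) = #((Ico lo hi).bipartiteAbove r p) := by
    intro p hp
    simp only [P, mem_filter, mem_product] at hp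
    obtain ⟨⟨h₁, h₂⟩, hlt⟩ := hp
    have hrange₁ := hrange h₁
    have hrange₂ := hrange h₂
    have e : (Ico lo hi).bipartiteAbove r p = Ico (k p.1) (k p.2) := by
      ext t
      simp only [bipartiteAbove, r, mem_filter, mem_Ico, Set.mem_Icc] at hrange₁ hrange₂ ⊢
      omega
    rw [e, Nat.card_Ico, Nat.cast_sub (hk h₁ h₂ hlt.le)]
  have crossing : ∀ t ∈ Ico lo hi,
      P.bipartiteBelow r t = {i ∈ B | k i ≤ t} ×ˢ {i ∈ B | t < k i} := by
    intro t _
    ext ⟨i, j⟩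
    simp only [bipartiteBelow, r, P, mem_filter, mem_product]
    constructor
    · rintro ⟨⟨⟨hi, hj⟩, -⟩, hit, htj⟩
      exact ⟨⟨hi, hit⟩, hj, htj⟩
    · rintro ⟨⟨hi, hit⟩, hj, htj⟩
      refine ⟨⟨⟨hi, hj⟩, lt_of_not_ge fun hji => ?_⟩, hit, htj⟩
      exact absurd (hk hj hi hji) (by omega)
  rw [sum_congr rfl gap, ← Nat.cast_sum, sum_card_bipartiteAbove_eq_sum_card_bipartiteBelow,
    Nat.cast_sum]
  refine sum_congr rfl fun t ht => ?_
  have hcompl := card_filter_add_card_filter_not (s := B) (fun i => k i ≤ t)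
  simp only [not_le] at hcompl
  rw [crossing t ht, card_product, Nat.cast_mul, ← hcompl, Nat.cast_add, add_sub_cancel_left]

theorem strictMonoOn_Icc_of_lt {α : Type*} [Preorder α] {k : ℕ → α} {l u : ℕ}
    (h : ∀ i j, l ≤ i → i < j → j ≤ u → k i < k j) : StrictMonoOn k ↑(Icc l u) :=
  fun i hi j hj hij => h i j (mem_Icc.1 hi).1 hij (mem_Icc.1 hj).2

theorem card_filter_comp_eq_of_bijOn {α β : Type*} {s : Finset α} {t : Finset β} {k : α → β}
    (hk : Set.BijOn k s t) (p : β → Prop) [DecidablePred p] :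
    #{i ∈ s | p (k i)} = #{j ∈ t | p j} := by
  refine card_nbij k (fun i hi => ?_) (hk.injOn.mono fun i hi => ?_) (fun j hj => ?_)
  · simp only [coe_filter, Set.mem_ofPred_eq] at hi ⊢
    exact ⟨hk.mapsTo hi.1, hi.2⟩
  · exact (mem_filter.1 hi).1
  · simp only [coe_filter, Set.mem_ofPred_eq] at hj
    obtain ⟨i, hi, rfl⟩ := hk.surjOn hj.1
    exact ⟨i, by simpa using ⟨hi, hj.2⟩, rfl⟩

theorem card_filter_le_of_bijOn {k : ℕ → ℕ} {N M : ℕ}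
    (hk : Set.BijOn k (Set.Icc 1 N) (Set.Icc 2 M)) {t : ℕ} (ht : t ≤ M) :
    #{i ∈ Icc 1 N | k i ≤ t} = t - 1 := by
  rw [card_filter_comp_eq_of_bijOn (s := Icc 1 N) (t := Icc 2 M) (by rwa [coe_Icc, coe_Icc])
      (· ≤ t),
    show {j ∈ Icc 2 M | j ≤ t} = Icc 2 t by ext; simp only [mem_filter, mem_Icc]; omega,
    Nat.card_Icc]
  omega

theorem card_filter_Icc_add_card_filter_Icc {l m u : ℕ} (hl : l ≤ m + 1) (hu : m ≤ u)
    (p : ℕ → Prop) [DecidablePred p] :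
    #{i ∈ Icc l m | p i} + #{i ∈ Icc (m + 1) u | p i} = #{i ∈ Icc l u | p i} := by
  have hdisj : Disjoint (Icc l m) (Icc (m + 1) u) :=
    disjoint_left.2 fun i hi hi' => by simp only [mem_Icc] at hi hi'; omega
  rw [← card_union_of_disjoint (disjoint_filter_filter hdisj), ← filter_union]
  congr 2
  ext i
  simp only [mem_union, mem_Icc]
  omega

/-- `2 (x (m - x) + y (m - 2 - y)) = 2 (m - 1) s - s² + 1 - (x - y - 1)²`, and `x - y - 1` is odd
when `s` is even. -/
theorem two_mul_add_le_of_add_eq (m : ℚ) {x y s : ℕ} (hs : x + y = s) :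
    2 * (x * (m - x) + y * (m - 2 - y)) ≤ 2 * (m - 1) * s - (s : ℚ) ^ 2 + (s % 2 : ℕ) := by
  subst hs
  have key : (1 : ℚ) ≤ ((x : ℚ) - y - 1) ^ 2 + ((x + y) % 2 : ℕ) := by
    rcases Nat.mod_two_eq_zero_or_one (x + y) with h | h
    · have hne : (x : ℤ) - y - 1 ≠ 0 := by omega
      have : (1 : ℤ) ≤ ((x : ℤ) - y - 1) ^ 2 := by
        nlinarith [Int.one_le_abs hne, sq_abs ((x : ℤ) - y - 1)]
      rw [h, Nat.cast_zero, add_zero]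
      exact_mod_cast this
    · rw [h]
      push_cast
      nlinarith
  push_cast
  nlinarith [key]

theorem sum_range_two_mul_quadratic_add_mod_two (c : ℚ) (j : ℕ) :
    ∑ r ∈ range (2 * j), (2 * c * r - (r : ℚ) ^ 2 + (r % 2 : ℕ)) =
      2 * c * j * (2 * j - 1) - j * (2 * j - 1) * (4 * j - 1) / 3 + j := by
  induction j with
  | zero => simp
  | succ j ih =>
    rw [show 2 * (j + 1) = 2 * j + 1 + 1 by ring, sum_range_succ, sum_range_succ, ih,
      show 2 * j % 2 = 0 by omega, show (2 * j + 1) % 2 = 1 by omega]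
    push_cast
    ring

/-- Lemma 3 of the paper for `n = 2m`, `a = m`: bound on the crossing count of a
sorted mesh `M'_{n,a}` whose defining permutation consists of two increasing blocks
partitioning `{2,…,n−1}`. -/
theorem mesh_crossing_bound (n a : ℕ) (hn : 6 ≤ n) (heven : Even n) (ha : a = n / 2)
    (k : ℕ → ℕ)
    (hmono₁ : ∀ i j : ℕ, 1 ≤ i → i < j → j ≤ a → k i < k j)
    (hmono₂ : ∀ i j : ℕ, a + 1 ≤ i → i < j → j ≤ n - 2 → k i < k j)
    (hbij : Set.BijOn k (Set.Icc 1 (n - 2)) (Set.Icc 2 (n - 1))) :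
    ((1 / 2 : ℚ) * (n : ℚ) ^ 2 - (3 / 2) * (n : ℚ) + 1) *
        ((a.choose 2 : ℚ) + ((n - 2 - a).choose 2 : ℚ)) +
      (∑ p ∈ (Finset.Icc 1 a ×ˢ Finset.Icc 1 a).filter (fun p => p.1 < p.2),
        ((k p.2 : ℚ) - (k p.1 : ℚ))) +
      (∑ p ∈ (Finset.Icc (a + 1) (n - 2) ×ˢ Finset.Icc (a + 1) (n - 2)).filter
          (fun p => p.1 < p.2), ((k p.2 : ℚ) - (k p.1 : ℚ))) ≤
    (1 / 8) * (n : ℚ) ^ 4 - (25 / 24) * (n : ℚ) ^ 3 + (7 / 2) * (n : ℚ) ^ 2 -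
      (29 / 6) * (n : ℚ) + 2 := by
  obtain ⟨m, rfl⟩ := heven
  obtain rfl : a = m := by omega
  have hrange : Set.MapsTo k (Set.Icc 1 (a + a - 2)) (Set.Icc 1 (a + a - 1)) :=
    hbij.mapsTo.mono_right (Set.Icc_subset_Icc_left one_le_two)
  have hcard₂ : (#(Icc (a + 1) (a + a - 2)) : ℚ) = a - 2 := by
    rw [Nat.card_Icc, show a + a - 2 + 1 - (a + 1) = a - 2 by omega, Nat.cast_sub (by omega)]
    norm_num
  rw [(strictMonoOn_Icc_of_lt hmono₁).monotoneOn.sum_filter_lt_sub_eq_sum_card_le_mul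
      (hrange.mono_left (by rw [coe_Icc]; exact Set.Icc_subset_Icc_right (by omega))),
    (strictMonoOn_Icc_of_lt hmono₂).monotoneOn.sum_filter_lt_sub_eq_sum_card_le_mul
      (hrange.mono_left (by rw [coe_Icc]; exact Set.Icc_subset_Icc_left (by omega))),
    Nat.card_Icc, Nat.add_sub_cancel, hcard₂]
  have hterm : ∀ t ∈ Ico 1 (a + a - 1),
      2 * ((#{i ∈ Icc 1 a | k i ≤ t} : ℚ) * (a - #{i ∈ Icc 1 a | k i ≤ t}) +
        #{i ∈ Icc (a + 1) (a + a - 2) | k i ≤ t} *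
          (a - 2 - #{i ∈ Icc (a + 1) (a + a - 2) | k i ≤ t})) ≤
      2 * (a - 1) * ((t - 1 : ℕ) : ℚ) - ((t - 1 : ℕ) : ℚ) ^ 2 + ((t - 1) % 2 : ℕ) := fun t ht =>
    two_mul_add_le_of_add_eq a <| (card_filter_Icc_add_card_filter_Icc le_add_self
      (by omega) _).trans (card_filter_le_of_bijOn hbij (by simp at ht; omega))
  have hbound : ∑ t ∈ Ico 1 (a + a - 1),
      (2 * (a - 1) * ((t - 1 : ℕ) : ℚ) - ((t - 1 : ℕ) : ℚ) ^ 2 + ((t - 1) % 2 : ℕ)) =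
      2 * ((a : ℚ) - 1) ^ 2 * (2 * a - 3) - (a - 1) * (2 * a - 3) * (4 * a - 5) / 3 + (a - 1) := by
    rw [sum_Ico_eq_sum_range, show a + a - 1 - 1 = 2 * (a - 1) by omega]
    simp only [Nat.add_sub_cancel_left]
    rw [sum_range_two_mul_quadratic_add_mod_two, Nat.cast_sub (by omega)]
    ring
  have hsum := sum_le_sum hterm
  rw [← mul_sum, sum_add_distrib, hbound] at hsum
  rw [show a + a - 2 - a = a - 2 by omega, Nat.cast_choose_two, Nat.cast_choose_two,
    Nat.cast_sub (by omega : 2 ≤ a)]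
  push_cast
  linarith
end

section
/- For all n ≥ 7, ((n−1)!/5!)²·5196/6·6 + Σ over odd i from 7 to n of ((n−1)!/(i−1)!)²·((i−1)!/24)(3i⁴−25i³+75i²−95i+42) + Σ over even i from 8 to n of ((n−1)!/(i−1)!)²·((i−2)!/24)(3i⁵−28i⁴+103i³−188i²+164i−48) equals ((n−1)!)²·[127/300 + 5/(24(n−4)!) + Σ_{i=3}^{n−5} 1/(3·i!) + Σ over even i from 8 to n of (1/(8(i−3)!) − 1/(4(i−2)!) + 1/(4(i−1)!·(i−1)))]. -/
/-!
After dividing by `((n - 1)!)²`, both the odd summand at `i` and the part of the even summand at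
`i` not matched by the last sum on the right equal
`1 / (3 (i - 5)!) + 5 / (24 (i - 4)!) - 5 / (24 (i - 5)!)`. Summed over `7 ≤ i ≤ n` this
telescopes to `∑_{j=2}^{n-5} 1 / (3 j!) + 5 / (24 (n - 4)!) - 5 / 48`, and
`5196 / 120² + 1 / 6 - 5 / 48 = 127 / 300`.
-/

section

open Finset Nat

variable {K : Type*} [Field K] [CharZero K]

variable (K) in
def telescopingTerm (i : ℕ) : K :=
  1 / (3 * ((i - 5)! : K)) + (5 / (24 * ((i - 4)! : K)) - 5 / (24 * ((i - 5)! : K)))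

lemma odd_summand_eq (N : K) {i : ℕ} (hi : 5 ≤ i) :
    (N / ((i - 1)! : K)) ^ 2 * (((i - 1)! : K) / 24) *
        (3 * (i : K) ^ 4 - 25 * (i : K) ^ 3 + 75 * (i : K) ^ 2 - 95 * (i : K) + 42) =
      N ^ 2 * telescopingTerm K i := by
  obtain ⟨k, rfl⟩ := Nat.exists_eq_add_of_le' hi
  simp only [telescopingTerm, show k + 5 - 1 = k + 4 by omega, show k + 5 - 4 = k + 1 by omega,
    Nat.add_sub_cancel, factorial_succ]
  push_cast [add_assoc]
  have : (k ! : K) ≠ 0 := by exact_mod_cast k.factorial_ne_zero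
  have : (k : K) + 1 ≠ 0 := by norm_cast
  have : (k : K) + 2 ≠ 0 := by norm_cast
  have : (k : K) + 3 ≠ 0 := by norm_cast
  have : (k : K) + 4 ≠ 0 := by norm_cast
  field_simp
  ring

lemma even_summand_eq (N : K) {i : ℕ} (hi : 5 ≤ i) :
    (N / ((i - 1)! : K)) ^ 2 * (((i - 2)! : K) / 24) *
        (3 * (i : K) ^ 5 - 28 * (i : K) ^ 4 + 103 * (i : K) ^ 3 - 188 * (i : K) ^ 2 +
          164 * (i : K) - 48) =
      N ^ 2 * (telescopingTerm K i + (1 / (8 * ((i - 3)! : K)) - 1 / (4 * ((i - 2)! : K)) +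
        1 / (4 * ((i - 1)! : K) * ((i : K) - 1)))) := by
  obtain ⟨k, rfl⟩ := Nat.exists_eq_add_of_le' hi
  rw [show ((k + 5 : ℕ) : K) - 1 = k + 4 by push_cast; ring]
  simp only [telescopingTerm, show k + 5 - 1 = k + 4 by omega, show k + 5 - 2 = k + 3 by omega,
    show k + 5 - 3 = k + 2 by omega, show k + 5 - 4 = k + 1 by omega, Nat.add_sub_cancel,
    factorial_succ]
  push_cast [add_assoc]
  have : (k ! : K) ≠ 0 := by exact_mod_cast k.factorial_ne_zero
  have : (k : K) + 1 ≠ 0 := by norm_cast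
  have : (k : K) + 2 ≠ 0 := by norm_cast
  have : (k : K) + 3 ≠ 0 := by norm_cast
  have : (k : K) + 4 ≠ 0 := by norm_cast
  field_simp
  ring

lemma sum_Icc_telescopingTerm {n : ℕ} (hn : 7 ≤ n) :
    ∑ i ∈ Icc 7 n, telescopingTerm K i =
      ∑ j ∈ Icc 3 (n - 5), 1 / (3 * (j ! : K)) + 5 / (24 * ((n - 4)! : K)) + 1 / 16 := by
  induction n, hn using Nat.le_induction with
  | base => norm_num [telescopingTerm, factorial]
  | succ n hn ih =>
    rw [sum_Icc_succ_top (by omega), ih, telescopingTerm, show n + 1 - 5 = n - 5 + 1 by omega,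
      sum_Icc_succ_top (by omega), show n + 1 - 4 = n - 3 by omega,
      show n - 5 + 1 = n - 4 by omega]
    ring

lemma filter_even_Icc_succ_of_odd {a : ℕ} (ha : Odd a) (n : ℕ) :
    (Icc (a + 1) n).filter Even = (Icc a n).filter Even := by
  ext i
  simp only [mem_filter, mem_Icc]
  refine ⟨fun ⟨⟨h₁, h₂⟩, h⟩ => ⟨⟨by omega, h₂⟩, h⟩, fun ⟨⟨h₁, h₂⟩, h⟩ => ⟨⟨?_, h₂⟩, h⟩⟩
  rcases h₁.eq_or_lt with rfl | h₁
  · exact absurd h (Nat.not_even_iff_odd.mpr ha)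
  · exact h₁

end

/-- The closed-form simplification establishing Theorem 2 of the paper from Lemma 8. -/
theorem closed_form_identity (n : ℕ) (hn : 7 ≤ n) :
    (((n - 1).factorial : ℚ) / (Nat.factorial 5 : ℚ)) ^ 2 * (5196 / 6) * 6 +
      (∑ i ∈ (Finset.Icc 7 n).filter (fun i => Odd i),
        (((n - 1).factorial : ℚ) / ((i - 1).factorial : ℚ)) ^ 2 *
          (((i - 1).factorial : ℚ) / 24) *
          (3 * (i : ℚ) ^ 4 - 25 * (i : ℚ) ^ 3 + 75 * (i : ℚ) ^ 2 - 95 * (i : ℚ) + 42)) +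
      (∑ i ∈ (Finset.Icc 8 n).filter (fun i => Even i),
        (((n - 1).factorial : ℚ) / ((i - 1).factorial : ℚ)) ^ 2 *
          (((i - 2).factorial : ℚ) / 24) *
          (3 * (i : ℚ) ^ 5 - 28 * (i : ℚ) ^ 4 + 103 * (i : ℚ) ^ 3 - 188 * (i : ℚ) ^ 2 +
            164 * (i : ℚ) - 48)) =
    ((n - 1).factorial : ℚ) ^ 2 *
      (127 / 300 + 5 / (24 * ((n - 4).factorial : ℚ)) +
        (∑ i ∈ Finset.Icc 3 (n - 5), 1 / (3 * (i.factorial : ℚ))) +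
        (∑ i ∈ (Finset.Icc 8 n).filter (fun i => Even i),
          (1 / (8 * ((i - 3).factorial : ℚ)) - 1 / (4 * ((i - 2).factorial : ℚ)) +
            1 / (4 * ((i - 1).factorial : ℚ) * ((i : ℚ) - 1))))) := by
  have five_le {p : ℕ → Prop} [DecidablePred p] {m i : ℕ} (hm : 5 ≤ m)
      (hi : i ∈ (Finset.Icc m n).filter p) : 5 ≤ i :=
    hm.trans (Finset.mem_Icc.mp (Finset.mem_filter.mp hi).1).1
  have h_split : ∑ i ∈ (Finset.Icc 7 n).filter Odd, telescopingTerm ℚ i +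
      ∑ i ∈ (Finset.Icc 7 n).filter Even, telescopingTerm ℚ i =
        ∑ i ∈ Finset.Icc 7 n, telescopingTerm ℚ i := by
    simp only [← Nat.not_odd_iff_even, Finset.sum_filter_add_sum_filter_not]
  rw [Finset.sum_congr rfl fun i hi => odd_summand_eq (K := ℚ) _ (five_le (by norm_num) hi),
    Finset.sum_congr rfl fun i hi => even_summand_eq (K := ℚ) _ (five_le (by norm_num) hi),
    ← Finset.mul_sum, ← Finset.mul_sum, Finset.sum_add_distrib,
    filter_even_Icc_succ_of_odd (by decide), show (Nat.factorial 5 : ℚ) = 120 by rfl]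
  linear_combination ((n - 1).factorial : ℚ) ^ 2 * (h_split + sum_Icc_telescopingTerm (K := ℚ) hn)
end
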